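/- arXiv:2109.11013 — 3 statements merged into one kernel-verified Lean document; each statement's English description precedes it below -/
import Mathlib

section
/- (Tupper's formula property, monochrome case n=2, m=1.) Let A_1, A_2 be positive integers, R = A_1 + A_2 + 1, and let S_1 ⊆ {0,…,A_1-1} × {0,…,A_2-1}. Define k = R · Σ_{(a,b)∈S_1} 2^{R²a + Rb + 1}. Then for all real x, y with 0 ≤ x < A_1 and k ≤ y < k + A_2: 1/2 < ⌊mod(⌊y/R⌋ · 2^{-R²⌊x⌋ - R·mod(⌊y⌋,R) - 1}, 2)⌋ if and only if (⌊x⌋, ⌊y - k⌋) ∈ S_1. -/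
/-!
Put `N = ∑_{p ∈ S₁} 2 ^ e(p)` with `e(a, b) = R²a + Rb + 1`, so that `k = R N`. Since `A₂ < R`,
every `y ∈ [k, k + A₂)` has `⌊y / R⌋ = N` and `⌊y⌋ mod R = ⌊y - k⌋`, so the formula computes the
binary digit `⌊N / 2 ^ e(⌊x⌋, ⌊y - k⌋)⌋ mod 2`. On `[0, A₁) × [0, R)` the exponents `e` are
distinct (`(a, b)` are the base-`R` digits of `(e - 1) / R`), so this digit is `1` exactly when
`(⌊x⌋, ⌊y - k⌋) ∈ S₁`.
-/

section FloorRing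

variable {K : Type*} [Field K] [LinearOrder K] [IsOrderedRing K] [FloorRing K]

theorem Int.floor_sub_two_mul_floor_div_two (u : K) : ⌊u - 2 * ⌊u / 2⌋⌋ = ⌊u⌋ % 2 := by
  have hdiv : ⌊u / 2⌋ = ⌊u⌋ / 2 := by exact_mod_cast Int.floor_div_natCast u 2
  have hcast : (2 : K) * ⌊u / 2⌋ = ((2 * ⌊u / 2⌋ : ℤ) : K) := by push_cast; rfl
  rw [hcast, Int.floor_sub_intCast, hdiv, Int.emod_def]

theorem Int.floor_intCast_mul_two_zpow_neg (n : ℤ) (m : ℕ) :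
    ⌊(n : K) * 2 ^ (-(m : ℤ))⌋ = n / 2 ^ m := by
  have h := Int.floor_div_natCast (n : K) (2 ^ m)
  rw [Int.floor_intCast] at h
  rw [zpow_neg, zpow_natCast, ← div_eq_mul_inv]
  exact_mod_cast h

theorem Int.floor_div_natCast_eq_and_floor_emod_eq {y : K} {R : ℕ} {n : ℤ}
    (hlo : R * n ≤ y) (hhi : y < R * n + R) :
    ⌊y / R⌋ = n ∧ ⌊y⌋ % R = ⌊y - R * n⌋ := by
  have hb : ⌊y - R * n⌋ = ⌊y⌋ - R * n := by exact_mod_cast Int.floor_sub_intCast y (R * n)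
  have hb0 : 0 ≤ ⌊y - R * n⌋ := Int.floor_nonneg.mpr (sub_nonneg.mpr hlo)
  have hbR : ⌊y - R * n⌋ < R := Int.floor_lt.mpr (by push_cast; linarith)
  rw [Int.floor_div_natCast]
  exact (Int.ediv_emod_unique (by omega)).mpr ⟨by omega, hb0, hbR⟩

end FloorRing

theorem Int.sum_two_pow_ediv_two_pow_emod_two (s : Finset ℕ) (m : ℕ) :
    (∑ i ∈ s, (2 : ℤ) ^ i) / 2 ^ m % 2 = if m ∈ s then 1 else 0 := by
  have hbit : (∑ i ∈ s, 2 ^ i).testBit m ↔ m ∈ s := by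
    rw [← Nat.mem_bitIndices, ← List.mem_toFinset, Finset.toFinset_bitIndices_sum_two_pow]
  rw [Nat.testBit_eq_decide_div_mod_eq, decide_eq_true_iff] at hbit
  have hcast : (∑ i ∈ s, (2 : ℤ) ^ i) / 2 ^ m % 2 = ((∑ i ∈ s, 2 ^ i) / 2 ^ m % 2 : ℕ) := by
    push_cast; rfl
  rw [hcast]
  split_ifs with hm
  · rw [hbit.mpr hm]; rfl
  · rw [Nat.mod_two_ne_one.mp (mt hbit.mp hm)]; rfl

def tupperIndex (R : ℕ) (p : ℤ × ℤ) : ℕ := ((R : ℤ) ^ 2 * p.1 + R * p.2 + 1).toNat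

theorem tupperIndex_cast {R : ℕ} {p : ℤ × ℤ} (h₁ : 0 ≤ p.1) (h₂ : 0 ≤ p.2) :
    (tupperIndex R p : ℤ) = R ^ 2 * p.1 + R * p.2 + 1 :=
  Int.toNat_of_nonneg (by positivity)

theorem tupperIndex_injOn (R : ℕ) :
    Set.InjOn (tupperIndex R) {p | 0 ≤ p.1 ∧ 0 ≤ p.2 ∧ p.2 < R} := by
  rintro ⟨a, b⟩ ⟨ha, hb, hbR⟩ ⟨a', b'⟩ ⟨ha', hb', hb'R⟩ h
  have hR : (0 : ℤ) < R := by omega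
  replace h := congrArg (Nat.cast : ℕ → ℤ) h
  rw [tupperIndex_cast ha hb, tupperIndex_cast ha' hb'] at h
  have hdigits : R * a + b = R * a' + b' :=
    mul_left_cancel₀ hR.ne' (by linear_combination h)
  obtain ⟨hq, hr⟩ := (Int.ediv_emod_unique hR).mpr ⟨(add_comm _ _ : b + R * a = _), hb, hbR⟩
  obtain ⟨hq', hr'⟩ := (Int.ediv_emod_unique hR).mpr
    ⟨(hdigits ▸ add_comm _ _ : b' + R * a' = R * a + b), hb', hb'R⟩
  exact Prod.ext (hq.symm.trans hq') (hr.symm.trans hr')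

theorem stmt_8_general (A₁ A₂ : ℕ)
    (S₁ : Finset (ℤ × ℤ))
    (hS : ∀ p ∈ S₁, (0 ≤ p.1 ∧ p.1 < A₁) ∧ (0 ≤ p.2 ∧ p.2 < A₂)) :
    ∀ (R : ℕ), R = A₁ + A₂ + 1 →
    ∀ (k : ℤ), k = R * ∑ p ∈ S₁, 2 ^ ((R : ℤ)^2 * p.1 + R * p.2 + 1).toNat →
    ∀ x y : ℝ, 0 ≤ x → x < A₁ → (k : ℝ) ≤ y → y < k + A₂ →
      ((1/2 : ℝ) <
        (⌊(⌊y / R⌋ : ℝ) * (2:ℝ) ^ (-(R:ℤ)^2 * ⌊x⌋ - R * (⌊y⌋ % R) - 1)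
            - 2 * ⌊((⌊y / R⌋ : ℝ) * (2:ℝ) ^ (-(R:ℤ)^2 * ⌊x⌋ - R * (⌊y⌋ % R) - 1)) / 2⌋⌋ : ℝ)
        ↔ (⌊x⌋, ⌊y - k⌋) ∈ S₁) := by
  intro R hR k hk x y hx0 _ hyk hyk₂
  set N : ℤ := ∑ p ∈ S₁, 2 ^ tupperIndex R p
  set box : Set (ℤ × ℤ) := {p | 0 ≤ p.1 ∧ 0 ≤ p.2 ∧ p.2 < R}
  have hA₂R : (A₂ : ℝ) < R := by exact_mod_cast (by omega : A₂ < R)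
  have hSbox : ↑S₁ ⊆ box := fun p hp => by
    obtain ⟨⟨h1, -⟩, h2, h3⟩ := hS p hp
    exact ⟨h1, h2, by omega⟩
  have hxy : (⌊x⌋, ⌊y - k⌋) ∈ box :=
    ⟨Int.floor_nonneg.mpr hx0, Int.floor_nonneg.mpr (by linarith),
      Int.floor_lt.mpr (by push_cast; linarith)⟩
  have hkN : (k : ℝ) = R * N := by rw [show k = R * N from hk, Int.cast_mul, Int.cast_natCast]
  obtain ⟨hyR, hymod⟩ :=
    Int.floor_div_natCast_eq_and_floor_emod_eq (n := N) (hkN ▸ hyk) (by linarith)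
  have hexp : -(R : ℤ) ^ 2 * ⌊x⌋ - R * ⌊y - k⌋ - 1 = -(tupperIndex R (⌊x⌋, ⌊y - k⌋) : ℤ) := by
    rw [tupperIndex_cast hxy.1 hxy.2.1]; ring
  have hN : N = ∑ i ∈ S₁.image (tupperIndex R), 2 ^ i :=
    (Finset.sum_image fun p hp q hq => tupperIndex_injOn R (hSbox hp) (hSbox hq)).symm
  have hmem : tupperIndex R (⌊x⌋, ⌊y - k⌋) ∈ S₁.image (tupperIndex R) ↔ (⌊x⌋, ⌊y - k⌋) ∈ S₁ := by
    rw [← Finset.mem_coe, Finset.coe_image, (tupperIndex_injOn R).mem_image_iff hSbox hxy,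
      Finset.mem_coe]
  rw [hyR, hymod, ← hkN, hexp, Int.floor_sub_two_mul_floor_div_two,
    Int.floor_intCast_mul_two_zpow_neg, hN, Int.sum_two_pow_ediv_two_pow_emod_two]
  split_ifs with h
  · exact iff_of_true (by norm_num) (hmem.mp h)
  · exact iff_of_false (by norm_num) (mt hmem.mpr h)

theorem stmt_8 (A₁ A₂ : ℕ) (hA₁ : 0 < A₁) (hA₂ : 0 < A₂)
    (S₁ : Finset (ℤ × ℤ))
    (hS : ∀ p ∈ S₁, (0 ≤ p.1 ∧ p.1 < A₁) ∧ (0 ≤ p.2 ∧ p.2 < A₂)) :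
    ∀ (R : ℕ), R = A₁ + A₂ + 1 →
    ∀ (k : ℤ), k = R * ∑ p ∈ S₁, 2 ^ ((R : ℤ)^2 * p.1 + R * p.2 + 1).toNat →
    ∀ x y : ℝ, 0 ≤ x → x < A₁ → (k : ℝ) ≤ y → y < k + A₂ →
      ((1/2 : ℝ) <
        (⌊(⌊y / R⌋ : ℝ) * (2:ℝ) ^ (-(R:ℤ)^2 * ⌊x⌋ - R * (⌊y⌋ % R) - 1)
            - 2 * ⌊((⌊y / R⌋ : ℝ) * (2:ℝ) ^ (-(R:ℤ)^2 * ⌊x⌋ - R * (⌊y⌋ % R) - 1)) / 2⌋⌋ : ℝ)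
        ↔ (⌊x⌋, ⌊y - k⌋) ∈ S₁) :=
  stmt_8_general A₁ A₂ S₁ hS
end

section
/- (Main theorem.) Let n ≥ 2, m, A_1,…,A_n be positive integers and R = A_1 + ⋯ + A_n + m. For 1 ≤ i ≤ m define f_i(x_1,…,x_n) = ⌊mod(⌊x_n/R⌋ · 2^{-R^n⌊x_1⌋ - R^{n-1}⌊x_2⌋ - ⋯ - R²⌊x_{n-1}⌋ - R·mod(⌊x_n⌋,R) - i}, 2)⌋. Let S_1,…,S_m be pairwise disjoint subsets of ([0,A_1) × ⋯ × [0,A_n)) ∩ ℤⁿ, and set k = R · Σ_{j=1}^{m} Σ_{(m_1,…,m_n)∈S_j} 2^{R^n m_1 + R^{n-1} m_2 + ⋯ + R m_n + j}. Then for every 1 ≤ i ≤ m and every real tuple (x_1,…,x_n) with 0 ≤ x_ℓ < A_ℓ for ℓ < n and k ≤ x_n < k + A_n: 1/2 < f_i(x_1,…,x_n) if and only if (⌊x_1⌋, …, ⌊x_{n-1}⌋, ⌊x_n - k⌋) ∈ S_i. -/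
/-!
Because `R` exceeds `m` and every coordinate bound, the exponent
`E(j, p) = R^n p₁ + ⋯ + R² pₙ₋₁ + R pₙ + j` is the base-`R` numeral with digits
`j, pₙ, pₙ₋₁, …, p₁`, so distinct pairs `(j, p)` have distinct exponents and the binary digits of
`K = k / R = ∑ 2^E(j, p)` that equal `1` are exactly those at the positions `E(j, p)`, `p ∈ S_j`.
For `k ≤ y < k + Aₙ` we have `⌊y / R⌋ = K` and `⌊y⌋ mod R = ⌊y - k⌋`, so `f_i` reads off the binary
digit of `K` at position `E(i, (⌊x⌋, ⌊y - k⌋))`.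
-/

open Finset

theorem Int.floor_sub_two_mul_floor_half {k : Type*} [Field k] [LinearOrder k] [IsOrderedRing k]
    [FloorRing k] (a : k) : ⌊a - 2 * ⌊a / 2⌋⌋ = ⌊a⌋ % 2 := by
  rw [Int.emod_def, ← Int.floor_sub_intCast]
  simpa using congrArg (fun z : ℤ => ⌊a - 2 * (z : k)⌋) (Int.floor_div_natCast a 2)

theorem Nat.testBit_sum_two_pow (s : Finset ℕ) (b : ℕ) : (∑ i ∈ s, 2 ^ i).testBit b ↔ b ∈ s := by
  rw [← Nat.mem_bitIndices, ← List.mem_toFinset, Finset.toFinset_bitIndices_sum_two_pow]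

theorem Nat.testBit_sum_two_pow_comp {ι : Type*} {T : Finset ι} {f : ι → ℕ} {a : ι}
    (hf : Set.InjOn f (insert a ↑T)) : (∑ z ∈ T, 2 ^ f z).testBit (f a) ↔ a ∈ T := by
  classical
  rw [← sum_image (hf.mono (Set.subset_insert _ _)), Nat.testBit_sum_two_pow, mem_image]
  refine ⟨fun ⟨z, hz, hza⟩ => ?_, fun ha => ⟨a, ha, rfl⟩⟩
  rwa [← hf (Set.mem_insert_of_mem _ hz) (Set.mem_insert _ _) hza]

theorem one_half_lt_floor_div_two_pow_mod_two_iff (K E : ℕ) :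
    (1 / 2 : ℝ) < ((⌊(K : ℝ) / 2 ^ E⌋ % 2 : ℤ) : ℝ) ↔ K.testBit E := by
  have hfloor : ⌊(K : ℝ) / 2 ^ E⌋ % 2 = ((K / 2 ^ E % 2 : ℕ) : ℤ) := by
    rw [← Nat.cast_ofNat, ← Nat.cast_pow, Int.floor_div_natCast, Int.floor_natCast]
    norm_cast
  rw [hfloor, Nat.testBit_eq_decide_div_mod_eq, decide_eq_true_iff]
  rcases Nat.mod_two_eq_zero_or_one (K / 2 ^ E) with h | h <;> rw [h] <;> norm_num

theorem Int.floor_div_natCast_and_emod_of_floor_eq {k : Type*} [Field k] [LinearOrder k]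
    [IsOrderedRing k] [FloorRing k] {y : k} {R : ℕ} {K t : ℤ}
    (ht : t ∈ Set.Ico 0 (R : ℤ)) (hy : ⌊y⌋ = t + R * K) : ⌊y / R⌋ = K ∧ ⌊y⌋ % R = t := by
  have hR : (R : ℤ) ≠ 0 := by have := ht.2; have := ht.1; omega
  refine ⟨?_, ?_⟩
  · rw [Int.floor_div_natCast, hy, Int.add_mul_ediv_left _ _ hR, Int.ediv_eq_zero_of_lt ht.1 ht.2,
      zero_add]
  · rw [hy, Int.add_mul_emod_self_left, Int.emod_eq_of_lt ht.1 ht.2]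

theorem Int.eq_of_sum_pow_mul_eq {q R : ℕ} {f g : Fin q → ℤ}
    (hf : ∀ i, f i ∈ Set.Ico 0 (R : ℤ)) (hg : ∀ i, g i ∈ Set.Ico 0 (R : ℤ))
    (h : ∑ i : Fin q, (R : ℤ) ^ (i : ℕ) * f i = ∑ i : Fin q, (R : ℤ) ^ (i : ℕ) * g i) : f = g := by
  let toDigits (f : Fin q → ℤ) (hf : ∀ i, f i ∈ Set.Ico 0 (R : ℤ)) : Fin q → Fin R :=
    fun i => ⟨(f i).toNat, by have := hf i; simp only [Set.mem_Ico] at this; omega⟩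
  have hval : ∀ f hf,
      ((finFunctionFinEquiv (toDigits f hf) : ℕ) : ℤ) = ∑ i : Fin q, (R : ℤ) ^ (i : ℕ) * f i := by
    intro f hf
    rw [finFunctionFinEquiv_apply]
    push_cast
    refine sum_congr rfl fun i _ => ?_
    rw [Int.toNat_of_nonneg (hf i).1, mul_comm]
  have hdig := finFunctionFinEquiv.injective <| Fin.ext <| by
    exact_mod_cast (hval f hf).trans (h.trans (hval g hg).symm)
  funext i
  have := congrArg (fun F => ((F i : ℕ) : ℤ)) hdig
  simpa [toDigits, Int.toNat_of_nonneg (hf i).1, Int.toNat_of_nonneg (hg i).1] using this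

section Encoding

variable {n R : ℕ}

def encode (n R : ℕ) (p : (Fin (n - 1) → ℤ) × ℤ) (c : ℤ) : ℤ :=
  (∑ ℓ : Fin (n - 1), (R : ℤ) ^ (n - ℓ.val) * p.1 ℓ) + R * p.2 + c

def digitBox (n R : ℕ) : Set ((Fin (n - 1) → ℤ) × ℤ) :=
  Set.univ.pi (fun _ => Set.Ico 0 (R : ℤ)) ×ˢ Set.Ico 0 (R : ℤ)

def encodeDigits (p : (Fin (n - 1) → ℤ) × ℤ) (c : ℤ) : Fin (n - 1 + 2) → ℤ :=
  Fin.cons c (Fin.cons p.2 fun ℓ => p.1 ℓ.rev)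

theorem encode_eq_sum_digits (p : (Fin (n - 1) → ℤ) × ℤ) (c : ℤ) :
    encode n R p c = ∑ i : Fin (n - 1 + 2), (R : ℤ) ^ (i : ℕ) * encodeDigits p c i := by
  have hrev : ∑ ℓ : Fin (n - 1), (R : ℤ) ^ (n - ℓ.val) * p.1 ℓ
      = ∑ ℓ : Fin (n - 1), (R : ℤ) ^ (ℓ.val + 2) * p.1 ℓ.rev := by
    refine (Fintype.sum_equiv Fin.revPerm _ _ fun ℓ => ?_).symm
    have := ℓ.isLt
    simp only [Fin.revPerm_apply, Fin.val_rev]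
    congr 2
    omega
  simp only [encode, encodeDigits, Fin.sum_univ_succ, Fin.cons_zero, Fin.cons_succ, Fin.val_zero,
    Fin.val_succ, hrev]
  ring_nf

theorem encode_nonneg {p : (Fin (n - 1) → ℤ) × ℤ} {c : ℤ} (hp₁ : ∀ ℓ, 0 ≤ p.1 ℓ) (hp₂ : 0 ≤ p.2)
    (hc : 0 ≤ c) : 0 ≤ encode n R p c := by
  unfold encode
  have := sum_nonneg fun ℓ (_ : ℓ ∈ univ) =>
    mul_nonneg (pow_nonneg (R.cast_nonneg' (α := ℤ)) (n - ℓ.val)) (hp₁ ℓ)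
  positivity

theorem encodeDigits_mem_Ico {p : (Fin (n - 1) → ℤ) × ℤ} {c : ℤ}
    (hp : p ∈ digitBox n R) (hc : c ∈ Set.Ico 0 (R : ℤ)) (i : Fin (n - 1 + 2)) :
    encodeDigits p c i ∈ Set.Ico 0 (R : ℤ) :=
  Fin.cases hc (Fin.cases hp.2 fun ℓ => hp.1 ℓ.rev trivial) i

theorem encode_inj {p p' : (Fin (n - 1) → ℤ) × ℤ} {c c' : ℤ}
    (hp : p ∈ digitBox n R) (hp' : p' ∈ digitBox n R)
    (hc : c ∈ Set.Ico 0 (R : ℤ)) (hc' : c' ∈ Set.Ico 0 (R : ℤ))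
    (h : encode n R p c = encode n R p' c') : p = p' ∧ c = c' := by
  rw [encode_eq_sum_digits, encode_eq_sum_digits] at h
  have hd := Int.eq_of_sum_pow_mul_eq (encodeDigits_mem_Ico hp hc) (encodeDigits_mem_Ico hp' hc') h
  obtain ⟨hc, hd⟩ := Fin.cons_injective2 hd
  obtain ⟨h₂, h₁⟩ := Fin.cons_injective2 hd
  refine ⟨Prod.ext (funext fun ℓ => ?_) h₂, hc⟩
  simpa using congrFun h₁ ℓ.rev

theorem mem_digitBox_of_lt {A : Fin (n - 1) → ℕ} {Aₙ : ℕ} (hAR : ∀ ℓ, A ℓ < R) (hAₙR : Aₙ < R)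
    {p : (Fin (n - 1) → ℤ) × ℤ}
    (hp : (∀ ℓ, 0 ≤ p.1 ℓ ∧ p.1 ℓ < A ℓ) ∧ (0 ≤ p.2 ∧ p.2 < Aₙ)) : p ∈ digitBox n R :=
  ⟨fun ℓ _ => ⟨(hp.1 ℓ).1, (hp.1 ℓ).2.trans (by exact_mod_cast hAR ℓ)⟩,
    hp.2.1, hp.2.2.trans (by exact_mod_cast hAₙR)⟩

theorem encode_toNat_injOn {m : ℕ} (hmR : m < R) :
    Set.InjOn (fun z : (_ : Fin m) × ((Fin (n - 1) → ℤ) × ℤ) => (encode n R z.2 (z.1 + 1)).toNat)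
      {z | z.2 ∈ digitBox n R} := by
  intro z hz z' hz' h
  dsimp only at h
  have hc : ∀ j : Fin m, ((j : ℤ) + 1) ∈ Set.Ico 0 (R : ℤ) := fun j => ⟨by positivity, by omega⟩
  have hnn : ∀ z : (_ : Fin m) × ((Fin (n - 1) → ℤ) × ℤ), z.2 ∈ digitBox n R →
      0 ≤ encode n R z.2 (z.1 + 1) :=
    fun z hz => encode_nonneg (fun ℓ => (hz.1 ℓ trivial).1) hz.2.1 (hc z.1).1
  have := hnn z hz
  have := hnn z' hz'
  obtain ⟨hp, hj⟩ := encode_inj hz hz' (hc z.1) (hc z'.1) (by omega)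
  exact Sigma.ext (Fin.ext (by omega)) (heq_of_eq hp)

end Encoding

theorem stmt_9_general (n m : ℕ) (A : Fin (n-1) → ℕ) (Aₙ : ℕ)
    (S : Fin m → Finset ((Fin (n-1) → ℤ) × ℤ))
    (hS : ∀ j, ∀ p ∈ S j, (∀ ℓ, 0 ≤ p.1 ℓ ∧ p.1 ℓ < A ℓ) ∧ (0 ≤ p.2 ∧ p.2 < Aₙ)) :
    ∀ (R : ℕ), R = (∑ ℓ, A ℓ) + Aₙ + m →
    ∀ (k : ℤ), k = R * ∑ j : Fin m, ∑ p ∈ S j,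
        2 ^ ((∑ ℓ : Fin (n-1), (R : ℤ) ^ (n - ℓ.val) * p.1 ℓ) + R * p.2 + (j.val + 1)).toNat →
    ∀ (i : Fin m) (x : Fin (n-1) → ℝ) (y : ℝ),
      (∀ ℓ, 0 ≤ x ℓ ∧ x ℓ < A ℓ) → (k : ℝ) ≤ y → y < k + Aₙ →
      ((1/2 : ℝ) <
        (⌊(⌊y / R⌋ : ℝ) * (2:ℝ) ^ (-(∑ ℓ : Fin (n-1), (R:ℤ) ^ (n - ℓ.val) * ⌊x ℓ⌋)
              - R * (⌊y⌋ % R) - (i.val + 1))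
          - 2 * ⌊((⌊y / R⌋ : ℝ) * (2:ℝ) ^ (-(∑ ℓ : Fin (n-1), (R:ℤ) ^ (n - ℓ.val) * ⌊x ℓ⌋)
              - R * (⌊y⌋ % R) - (i.val + 1))) / 2⌋⌋ : ℝ)
        ↔ ((fun ℓ => ⌊x ℓ⌋), ⌊y - k⌋) ∈ S i) := by
  intro R hR k hk i x y hx hy₁ hy₂
  set t := ⌊y - k⌋ with ht_def
  have ht : 0 ≤ t ∧ t < Aₙ :=
    ⟨Int.floor_nonneg.2 (by linarith), Int.floor_lt.2 (by push_cast; linarith)⟩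
  have hAR : ∀ ℓ, A ℓ < R := fun ℓ => by
    have := single_le_sum (fun ℓ _ => Nat.zero_le (A ℓ)) (mem_univ ℓ)
    have := i.pos
    omega
  have hAₙR : Aₙ < R := by have := i.pos; omega
  let e : (_ : Fin m) × ((Fin (n - 1) → ℤ) × ℤ) → ℕ := fun z => (encode n R z.2 (z.1 + 1)).toNat
  let a : (_ : Fin m) × ((Fin (n - 1) → ℤ) × ℤ) := ⟨i, (fun ℓ => ⌊x ℓ⌋, t)⟩
  have ha : a.2 ∈ digitBox n R := mem_digitBox_of_lt hAR hAₙR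
    ⟨fun ℓ => ⟨Int.floor_nonneg.2 (hx ℓ).1, Int.floor_lt.2 (by exact_mod_cast (hx ℓ).2)⟩, ht⟩
  have hinj : Set.InjOn e (insert a ↑(univ.sigma S)) := (encode_toNat_injOn (by omega)).mono
    (Set.insert_subset ha fun z hz => mem_digitBox_of_lt hAR hAₙR (hS _ _ (mem_sigma.1 hz).2))
  set K := ∑ z ∈ univ.sigma S, 2 ^ e z with hK
  have hkK : k = R * K := by rw [hk, hK, sum_sigma]; push_cast; rfl
  obtain ⟨hdiv, hmod⟩ := Int.floor_div_natCast_and_emod_of_floor_eq (y := y) (R := R) (K := K)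
    ⟨ht.1, by omega⟩ (by rw [ht_def, Int.floor_sub_intCast, hkK]; ring)
  have hexp :
      -(∑ ℓ : Fin (n-1), (R:ℤ) ^ (n - ℓ.val) * ⌊x ℓ⌋) - R * t - (i.val + 1) = -(e a : ℤ) := by
    rw [Int.toNat_of_nonneg (encode_nonneg (fun ℓ => (ha.1 ℓ trivial).1) ht.1 (by positivity))]
    unfold encode; ring
  rw [hdiv, hmod, hexp, Int.cast_natCast, zpow_neg, zpow_natCast, ← div_eq_mul_inv,
    Int.floor_sub_two_mul_floor_half, one_half_lt_floor_div_two_pow_mod_two_iff,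
    Nat.testBit_sum_two_pow_comp hinj, mem_sigma]
  exact and_iff_right (mem_univ i)

theorem stmt_9 (n m : ℕ) (hn : 2 ≤ n) (hm : 0 < m)
    (A : Fin (n-1) → ℕ) (Aₙ : ℕ) (hA : ∀ ℓ, 0 < A ℓ) (hAₙ : 0 < Aₙ)
    (S : Fin m → Finset ((Fin (n-1) → ℤ) × ℤ))
    (hdisj : ∀ j j', j ≠ j' → Disjoint (S j) (S j'))
    (hS : ∀ j, ∀ p ∈ S j, (∀ ℓ, 0 ≤ p.1 ℓ ∧ p.1 ℓ < A ℓ) ∧ (0 ≤ p.2 ∧ p.2 < Aₙ)) :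
    ∀ (R : ℕ), R = (∑ ℓ, A ℓ) + Aₙ + m →
    ∀ (k : ℤ), k = R * ∑ j : Fin m, ∑ p ∈ S j,
        2 ^ ((∑ ℓ : Fin (n-1), (R : ℤ) ^ (n - ℓ.val) * p.1 ℓ) + R * p.2 + (j.val + 1)).toNat →
    ∀ (i : Fin m) (x : Fin (n-1) → ℝ) (y : ℝ),
      (∀ ℓ, 0 ≤ x ℓ ∧ x ℓ < A ℓ) → (k : ℝ) ≤ y → y < k + Aₙ →
      ((1/2 : ℝ) <
        (⌊(⌊y / R⌋ : ℝ) * (2:ℝ) ^ (-(∑ ℓ : Fin (n-1), (R:ℤ) ^ (n - ℓ.val) * ⌊x ℓ⌋)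
              - R * (⌊y⌋ % R) - (i.val + 1))
          - 2 * ⌊((⌊y / R⌋ : ℝ) * (2:ℝ) ^ (-(∑ ℓ : Fin (n-1), (R:ℤ) ^ (n - ℓ.val) * ⌊x ℓ⌋)
              - R * (⌊y⌋ % R) - (i.val + 1))) / 2⌋⌋ : ℝ)
        ↔ ((fun ℓ => ⌊x ℓ⌋), ⌊y - k⌋) ∈ S i) :=
  stmt_9_general n m A Aₙ S hS
end

section
/- (Main theorem, case n=2.) Let m, A_1, A_2 be positive integers and R = A_1 + A_2 + m. For 1 ≤ i ≤ m define f_i(x,y) = ⌊mod(⌊y/R⌋ · 2^{-R²⌊x⌋ - R·mod(⌊y⌋,R) - i}, 2)⌋. Let S_1,…,S_m be pairwise disjoint subsets of {0,…,A_1-1} × {0,…,A_2-1} and k = R · Σ_{j=1}^{m} Σ_{(a,b)∈S_j} 2^{R²a + Rb + j}. Then for all real x, y with 0 ≤ x < A_1 and k ≤ y < k + A_2, and all 1 ≤ i ≤ m: 1/2 < f_i(x,y) if and only if (⌊x⌋, ⌊y - k⌋) ∈ S_i. -/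
/-!
Since `0 ≤ ⌊y - k⌋ < A₂ < R` and `k = R K` with `K = ∑ 2^(R²a + Rb + j)`, we get `⌊y / R⌋ = K` and
`⌊y⌋ mod R = ⌊y - k⌋`. The formula for `f_i` then reads off the binary digit of `K` at position
`R²⌊x⌋ + R⌊y - k⌋ + i`. The exponents in `K` are distinct, being base-`R` numerals with digits
`b < R` and `j < R`, so that digit is `1` exactly when `(⌊x⌋, ⌊y - k⌋) ∈ S_i`.
-/

open Finset

theorem Int.floor_sub_natCast_mul_floor_div {k : Type*} [Field k] [LinearOrder k]
    [IsOrderedRing k] [FloorRing k] (z : k) (d : ℕ) : ⌊z - d * ⌊z / d⌋⌋ = ⌊z⌋ % d := by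
  rw [Int.floor_div_natCast, Int.emod_def]
  exact_mod_cast Int.floor_sub_intCast z (d * (⌊z⌋ / d))

theorem Int.floor_intCast_mul_two_zpow_neg_s10 {k : Type*} [Field k] [LinearOrder k]
    [IsOrderedRing k] [FloorRing k] (n : ℤ) (e : ℕ) :
    ⌊(n : k) * 2 ^ (-(e : ℤ))⌋ = n / 2 ^ e := by
  rw [zpow_neg, zpow_natCast, ← div_eq_mul_inv, ← Nat.cast_ofNat, ← Nat.cast_pow,
    Int.floor_div_natCast, Int.floor_intCast]
  push_cast
  rfl

theorem half_lt_floor_mod_two_iff_testBit (n e : ℕ) :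
    (1 / 2 : ℝ) < (⌊((n : ℤ) : ℝ) * 2 ^ (-(e : ℤ))
      - 2 * ⌊((n : ℤ) : ℝ) * 2 ^ (-(e : ℤ)) / 2⌋⌋ : ℝ) ↔ n.testBit e := by
  have hmod : ⌊((n : ℤ) : ℝ) * 2 ^ (-(e : ℤ)) - 2 * ⌊((n : ℤ) : ℝ) * 2 ^ (-(e : ℤ)) / 2⌋⌋
      = ⌊((n : ℤ) : ℝ) * 2 ^ (-(e : ℤ))⌋ % 2 := by
    simpa only [Nat.cast_ofNat] using Int.floor_sub_natCast_mul_floor_div _ 2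
  rw [hmod, Int.floor_intCast_mul_two_zpow_neg_s10, Nat.testBit_eq_decide_div_mod_eq,
    decide_eq_true_iff]
  rcases Nat.mod_two_eq_zero_or_one (n / 2 ^ e) with h | h <;>
  · have hz : (n : ℤ) / 2 ^ e % 2 = ((n / 2 ^ e % 2 : ℕ) : ℤ) := by push_cast; rfl
    rw [hz, h]
    norm_num

theorem Nat.testBit_sum_two_pow_of_injOn {ι : Type*} (s : Finset ι) {f : ι → ℕ}
    (hf : Set.InjOn f s) (e : ℕ) : (∑ u ∈ s, 2 ^ f u).testBit e ↔ ∃ u ∈ s, f u = e := by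
  classical
  rw [← Finset.sum_image hf, ← Nat.mem_bitIndices, ← List.mem_toFinset,
    Finset.toFinset_bitIndices_sum_two_pow, Finset.mem_image]

theorem Int.eq_and_eq_of_mul_add_eq_mul_add {R q q' r r' : ℤ} (hr : 0 ≤ r ∧ r < R)
    (hr' : 0 ≤ r' ∧ r' < R) (h : R * q + r = R * q' + r') : q = q' ∧ r = r' := by
  have hR : 0 < R := by omega
  have hdm := (Int.ediv_emod_unique (q := q) hR).2 ⟨add_comm _ _, hr⟩
  have hdm' := (Int.ediv_emod_unique (q := q') hR).2 ⟨add_comm _ _, hr'⟩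
  rw [h] at hdm
  exact ⟨hdm.1.symm.trans hdm'.1, hdm.2.symm.trans hdm'.2⟩

theorem floor_div_eq_and_floor_emod_eq {R : ℕ} {K : ℤ} {y : ℝ} (h₁ : ((R * K : ℤ) : ℝ) ≤ y)
    (h₂ : y < (R * K : ℤ) + R) : ⌊y / R⌋ = K ∧ ⌊y⌋ % R = ⌊y - (R * K : ℤ)⌋ := by
  have hR : (0 : ℤ) < R := by
    have : (0 : ℝ) < R := by linarith
    exact_mod_cast this
  rw [Int.floor_div_natCast, Int.ediv_emod_unique hR]
  refine ⟨by rw [Int.floor_sub_intCast]; ring, Int.floor_nonneg.2 (by linarith), ?_⟩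
  exact Int.floor_lt.2 (by push_cast at h₂ ⊢; linarith)

/-- The index `j` is zero-based: `j` stands for the paper's `S_{j+1}`. -/
def cellExponent (R j : ℕ) (p : ℤ × ℤ) : ℤ := (R : ℤ) ^ 2 * p.1 + R * p.2 + (j + 1)

theorem cellExponent_nonneg {R j : ℕ} {p : ℤ × ℤ} (h₁ : 0 ≤ p.1) (h₂ : 0 ≤ p.2) :
    0 ≤ cellExponent R j p := by
  unfold cellExponent
  positivity

theorem eq_and_eq_of_cellExponent_eq {R j j' : ℕ} {p p' : ℤ × ℤ} (hj : j + 1 < R)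
    (hj' : j' + 1 < R) (hp : 0 ≤ p.2 ∧ p.2 < R) (hp' : 0 ≤ p'.2 ∧ p'.2 < R)
    (h : cellExponent R j p = cellExponent R j' p') : j = j' ∧ p = p' := by
  have hhigh : (R : ℤ) * (R * p.1 + p.2) + (j + 1) = R * (R * p'.1 + p'.2) + (j' + 1) := by
    unfold cellExponent at h
    linear_combination h
  obtain ⟨hlow, hjj⟩ := Int.eq_and_eq_of_mul_add_eq_mul_add (by omega) (by omega) hhigh
  obtain ⟨h₁, h₂⟩ := Int.eq_and_eq_of_mul_add_eq_mul_add hp hp' hlow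
  exact ⟨by omega, Prod.ext h₁ h₂⟩

theorem testBit_sum_two_pow_cellExponent_iff {m R : ℕ} (hmR : m < R)
    (S : Fin m → Finset (ℤ × ℤ)) (hS : ∀ j, ∀ p ∈ S j, 0 ≤ p.1 ∧ 0 ≤ p.2 ∧ p.2 < R)
    (i : Fin m) {p : ℤ × ℤ} (hp : 0 ≤ p.1 ∧ 0 ≤ p.2 ∧ p.2 < R) :
    (∑ j : Fin m, ∑ q ∈ S j, 2 ^ (cellExponent R j q).toNat).testBit
      (cellExponent R i p).toNat ↔ p ∈ S i := by
  have hinj : ∀ j j' : Fin m, ∀ q q' : ℤ × ℤ, 0 ≤ q.1 ∧ 0 ≤ q.2 ∧ q.2 < R →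
      0 ≤ q'.1 ∧ 0 ≤ q'.2 ∧ q'.2 < R →
      (cellExponent R j q).toNat = (cellExponent R j' q').toNat → j = j' ∧ q = q' := by
    intro j j' q q' hq hq' h
    have := cellExponent_nonneg (R := R) (j := j) hq.1 hq.2.1
    have := cellExponent_nonneg (R := R) (j := j') hq'.1 hq'.2.1
    obtain ⟨hjj, hqq⟩ := eq_and_eq_of_cellExponent_eq (j := j) (j' := j')
      (by omega) (by omega) hq.2 hq'.2 (by omega)
    exact ⟨Fin.ext hjj, hqq⟩
  rw [Finset.sum_sigma', Nat.testBit_sum_two_pow_of_injOn]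
  · constructor
    · rintro ⟨⟨j, q⟩, hq, h⟩
      have hq := (Finset.mem_sigma.1 hq).2
      obtain ⟨rfl, rfl⟩ := hinj j i q p (hS j q hq) hp h
      exact hq
    · exact fun h => ⟨⟨i, p⟩, Finset.mem_sigma.2 ⟨Finset.mem_univ _, h⟩, rfl⟩
  · rintro ⟨j, q⟩ hq ⟨j', q'⟩ hq' h
    have hq := (Finset.mem_sigma.1 hq).2
    have hq' := (Finset.mem_sigma.1 hq').2
    obtain ⟨rfl, rfl⟩ := hinj j j' q q' (hS j q hq) (hS j' q' hq') h
    rfl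

theorem stmt_10_general (m A₁ A₂ : ℕ)
    (S : Fin m → Finset (ℤ × ℤ))
    (hS : ∀ j, ∀ p ∈ S j, (0 ≤ p.1 ∧ p.1 < A₁) ∧ (0 ≤ p.2 ∧ p.2 < A₂)) :
    ∀ (R : ℕ), R = A₁ + A₂ + m →
    ∀ (k : ℤ), k = R * ∑ j : Fin m, ∑ p ∈ S j,
        2 ^ ((R : ℤ)^2 * p.1 + R * p.2 + (j.val + 1)).toNat →
    ∀ (x y : ℝ) (i : Fin m), 0 ≤ x → x < A₁ → (k : ℝ) ≤ y → y < k + A₂ →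
      ((1/2 : ℝ) <
        (⌊(⌊y / R⌋ : ℝ) * (2:ℝ) ^ (-(R:ℤ)^2 * ⌊x⌋ - R * (⌊y⌋ % R) - (i.val + 1))
          - 2 * ⌊((⌊y / R⌋ : ℝ) * (2:ℝ) ^ (-(R:ℤ)^2 * ⌊x⌋ - R * (⌊y⌋ % R) - (i.val + 1))) / 2⌋⌋ : ℝ)
        ↔ (⌊x⌋, ⌊y - k⌋) ∈ S i) := by
  intro R hR k hk x y i hx hxA hky hyk
  have hA₁ : 0 < A₁ := by exact_mod_cast hx.trans_lt hxA
  set K : ℕ := ∑ j : Fin m, ∑ p ∈ S j, 2 ^ (cellExponent R j p).toNat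
  have hkK : k = R * (K : ℤ) := by
    simp only [hk, K, Nat.cast_sum, Nat.cast_pow, Nat.cast_ofNat]
    rfl
  have hA₂R : (A₂ : ℝ) < R := by
    have := i.pos
    exact_mod_cast (by omega : A₂ < R)
  rw [hkK] at hky hyk ⊢
  obtain ⟨hyR, hymod⟩ := floor_div_eq_and_floor_emod_eq hky (by linarith)
  have hcell : 0 ≤ ⌊x⌋ ∧ 0 ≤ ⌊y - (R * K : ℤ)⌋ ∧ ⌊y - (R * K : ℤ)⌋ < R := by
    refine ⟨Int.floor_nonneg.2 hx, Int.floor_nonneg.2 (by linarith), Int.floor_lt.2 ?_⟩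
    push_cast at hyk ⊢
    linarith
  have hexp : -(R : ℤ) ^ 2 * ⌊x⌋ - R * (⌊y⌋ % R) - (i.val + 1)
      = -((cellExponent R i (⌊x⌋, ⌊y - (R * K : ℤ)⌋)).toNat : ℤ) := by
    rw [hymod, Int.toNat_of_nonneg (cellExponent_nonneg hcell.1 hcell.2.1), cellExponent]
    ring
  rw [hyR, hexp, half_lt_floor_mod_two_iff_testBit]
  exact testBit_sum_two_pow_cellExponent_iff (by omega) S
    (fun j p hp => by have := hS j p hp; omega) i hcell

theorem stmt_10 (m A₁ A₂ : ℕ) (hm : 0 < m) (hA₁ : 0 < A₁) (hA₂ : 0 < A₂)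
    (S : Fin m → Finset (ℤ × ℤ))
    (hdisj : ∀ j j', j ≠ j' → Disjoint (S j) (S j'))
    (hS : ∀ j, ∀ p ∈ S j, (0 ≤ p.1 ∧ p.1 < A₁) ∧ (0 ≤ p.2 ∧ p.2 < A₂)) :
    ∀ (R : ℕ), R = A₁ + A₂ + m →
    ∀ (k : ℤ), k = R * ∑ j : Fin m, ∑ p ∈ S j,
        2 ^ ((R : ℤ)^2 * p.1 + R * p.2 + (j.val + 1)).toNat →
    ∀ (x y : ℝ) (i : Fin m), 0 ≤ x → x < A₁ → (k : ℝ) ≤ y → y < k + A₂ →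
      ((1/2 : ℝ) <
        (⌊(⌊y / R⌋ : ℝ) * (2:ℝ) ^ (-(R:ℤ)^2 * ⌊x⌋ - R * (⌊y⌋ % R) - (i.val + 1))
          - 2 * ⌊((⌊y / R⌋ : ℝ) * (2:ℝ) ^ (-(R:ℤ)^2 * ⌊x⌋ - R * (⌊y⌋ % R) - (i.val + 1))) / 2⌋⌋ : ℝ)
        ↔ (⌊x⌋, ⌊y - k⌋) ∈ S i) :=
  stmt_10_general m A₁ A₂ S hS
end
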